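/- Let T be a tangle of order k in a k-entangled connectivity system K = (E, λ), and let X ∈ T be T-linked (there is no Y ∈ T with X ⊆ Y and λ(Y) < λ(X)). Then X is λ(X)-branched: there is a partial branch-decomposition of width at most λ(X) in which one leaf displays E \ X and every other leaf displays at most one element of X. -/

import Mathlib

open Set

variable {α : Type*} {V : Type*}

/-- An (unbundled) connectivity-system candidate: a ground set together with a
connectivity function on its subsets. -/
structure PreSys (α : Type*) where
  E : Set α
  lam : Set α → ℕ

/-- `K` is a connectivity system: the ground set is finite and the connectivity
function is symmetric and submodular on subsets of the ground set. -/
def PreSys.IsConnSys (K : PreSys α) : Prop :=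
  K.E.Finite ∧
  (∀ X ⊆ K.E, K.lam X = K.lam (K.E \ X)) ∧
  (∀ X ⊆ K.E, ∀ Y ⊆ K.E, K.lam (X ∩ Y) + K.lam (X ∪ Y) ≤ K.lam X + K.lam Y)

/-- A tangle of order `k` in a connectivity system. -/
def IsTangle (K : PreSys α) (k : ℕ) (T : Set (Set α)) : Prop :=
  (∀ A ∈ T, A ⊆ K.E ∧ K.lam A < k) ∧
  (∀ A ⊆ K.E, K.lam A < k → (A ∈ T ↔ (K.E \ A) ∉ T)) ∧
  (∀ A ∈ T, ∀ B ∈ T, ∀ C ∈ T, A ∪ B ∪ C ≠ K.E) ∧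
  (∀ A ∈ T, A.ncard ≠ K.E.ncard - 1)

/-- `K` dominates `K₀`. -/
def Dominates (K K₀ : PreSys α) : Prop :=
  K₀.E ⊆ K.E ∧ ∀ X ⊆ K₀.E, K₀.lam X ≤ K.lam X

/-- The collection of subsets of `K.E` of `K`-connectivity `< k` whose trace on
`K₀.E` lies in `T₀`; when `K` dominates `K₀` and `T₀` is a tangle, this is the
tangle induced by `T₀` in `K`. -/
def InducedTangle (K K₀ : PreSys α) (k : ℕ) (T₀ : Set (Set α)) : Set (Set α) :=
  {X | X ⊆ K.E ∧ K.lam X < k ∧ X ∩ K₀.E ∈ T₀}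

/-- `K₀` adheres to `K`. -/
def Adheres (K₀ K : PreSys α) : Prop :=
  Dominates K K₀ ∧
  ∀ A B : Set α, A ∪ B = K₀.E → Disjoint A B →
    ∃ X₁ X₂ : Set α, Disjoint X₁ X₂ ∧ (X₁ ∪ X₂ = A ∨ X₁ ∪ X₂ = B) ∧
      K.lam X₁ ≤ K₀.lam A ∧ K.lam X₂ ≤ K₀.lam A

/-- The tangle `T` of order `k` in `K` splits in `K₀`: two distinct tangles of
order `k` in `K₀` both induce `T`. -/
def Splits (K K₀ : PreSys α) (k : ℕ) (T : Set (Set α)) : Prop :=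
  ∃ T₁ T₂ : Set (Set α), T₁ ≠ T₂ ∧ IsTangle K₀ k T₁ ∧ IsTangle K₀ k T₂ ∧
    InducedTangle K K₀ k T₁ = T ∧ InducedTangle K K₀ k T₂ = T

/-- `K` is `k`-entangled: for each `t ≤ k` there is at most one tangle of order `t`. -/
def Entangled (K : PreSys α) (k : ℕ) : Prop :=
  ∀ t ≤ k, ∀ T₁ T₂ : Set (Set α), IsTangle K t T₁ → IsTangle K t T₂ → T₁ = T₂

/-! ### Matroids -/

/-- The rank of a set in a matroid: the largest cardinality of an independent
subset of `X`. -/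
noncomputable def mrank (M : Matroid α) (X : Set α) : ℕ :=
  sSup {n | ∃ I, M.Indep I ∧ I ⊆ X ∧ I.ncard = n}

/-- The connectivity function `λ_M(X) = r(X) + r(E \ X) - r(M) + 1` of a matroid. -/
noncomputable def lamM (M : Matroid α) (X : Set α) : ℕ :=
  mrank M X + mrank M (M.E \ X) - mrank M M.E + 1

/-- The connectivity function of the deletion `M \ e`, expressed via the rank
function of `M` (for `X ⊆ E(M) \ {e}` one has `r_{M\e}(X) = r_M(X)`). -/
noncomputable def lamDel (M : Matroid α) (e : α) (X : Set α) : ℕ :=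
  mrank M X + mrank M ((M.E \ {e}) \ X) - mrank M (M.E \ {e}) + 1

/-- The connectivity function of the contraction `M / e`, expressed via the rank
function of `M` (for `Y ⊆ E(M) \ {e}` one has `r_{M/e}(Y) = r_M(Y ∪ {e}) - r_M({e})`,
and `r(M/e) = r(M) - r_M({e})`). -/
noncomputable def lamCon (M : Matroid α) (e : α) (X : Set α) : ℕ :=
  mrank M (X ∪ {e}) + mrank M (((M.E \ {e}) \ X) ∪ {e}) - mrank M {e} - mrank M M.E + 1

/-- The connectivity system `K(M)` of a matroid `M`. -/
noncomputable def KM (M : Matroid α) : PreSys α := ⟨M.E, lamM M⟩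

/-- The connectivity system `K(M \ e)`. -/
noncomputable def KDel (M : Matroid α) (e : α) : PreSys α := ⟨M.E \ {e}, lamDel M e⟩

/-- The connectivity system `K(M / e)`. -/
noncomputable def KCon (M : Matroid α) (e : α) : PreSys α := ⟨M.E \ {e}, lamCon M e⟩

/-! ### Graphs, cut-rank and pivoting -/

/-- The cut-rank, relative to a ground set `S` of vertices, of a set `X`:
the GF(2)-rank of the adjacency submatrix with rows `X ∩ S` and columns `S \ X`.
For an induced subgraph of `G` on `S` this is its cut-rank function. -/
noncomputable def cutRankOn (G : SimpleGraph V) [Fintype V] (S X : Set V) : ℕ :=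
  letI : Fintype ↥(X ∩ S) := (Set.toFinite _).fintype
  letI : Fintype ↥(S \ X) := (Set.toFinite _).fintype
  letI : DecidableRel G.Adj := Classical.decRel _
  Matrix.rank (Matrix.of fun (a : ↥(X ∩ S)) (b : ↥(S \ X)) =>
    if G.Adj a.1 b.1 then (1 : ZMod 2) else 0)

/-- The cut-rank function `ρ_G` of a graph `G`. -/
noncomputable def cutRank (G : SimpleGraph V) [Fintype V] (X : Set V) : ℕ :=
  cutRankOn G Set.univ X

/-- Local complementation at a vertex `v`: adjacency among the neighbours of `v`
is complemented. -/
def localComp (G : SimpleGraph V) (v : V) : SimpleGraph V where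
  Adj a b := a ≠ b ∧
    ((G.Adj v a ∧ G.Adj v b ∧ ¬ G.Adj a b) ∨ (¬ (G.Adj v a ∧ G.Adj v b) ∧ G.Adj a b))
  symm := by
    constructor
    intro a b h
    obtain ⟨hab, h⟩ := h
    refine ⟨hab.symm, ?_⟩
    rcases h with ⟨h1, h2, h3⟩ | ⟨h1, h2⟩
    · exact Or.inl ⟨h2, h1, fun h => h3 h.symm⟩
    · exact Or.inr ⟨fun h => h1 ⟨h.2, h.1⟩, h2.symm⟩
  loopless := ⟨fun a h => h.1 rfl⟩

/-- The pivot `G × e` on an edge `e = uv`, defined as `G * u * v * u` where `*`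
denotes local complementation. -/
def pivot (G : SimpleGraph V) (u v : V) : SimpleGraph V :=
  localComp (localComp (localComp G u) v) u

/-- The connectivity system `CR(G) = (V(G), ρ_G)`. -/
noncomputable def CR (G : SimpleGraph V) [Fintype V] : PreSys V :=
  ⟨Set.univ, cutRank G⟩

/-- The connectivity system `CR(G - v)` of the graph obtained by deleting the
vertex `v`: ground set `V \ {v}` with the cut-rank computed inside `V \ {v}`. -/
noncomputable def CRdel (G : SimpleGraph V) [Fintype V] (v : V) : PreSys V :=
  ⟨{v}ᶜ, cutRankOn G {v}ᶜ⟩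

/-! ### Partial branch-decompositions -/

/-- A partial branch-decomposition of a connectivity system `K`: a cubic tree
(each vertex of degree 1 or 3) together with a map from the ground set to the
leaves of the tree. -/
structure PBD (K : PreSys α) (V : Type*) where
  tree : SimpleGraph V
  isTree : tree.IsTree
  cubic : ∀ x : V, (tree.neighborSet x).ncard = 1 ∨ (tree.neighborSet x).ncard = 3
  f : α → V
  maps : ∀ a ∈ K.E, (tree.neighborSet (f a)).ncard = 1

/-- A leaf of the cubic tree of a partial branch-decomposition. -/
def PBD.IsLeaf {K : PreSys α} (D : PBD K V) (x : V) : Prop :=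
  (D.tree.neighborSet x).ncard = 1

/-- The side of the edge `uw` of the tree `tr` towards `u`: the elements of the
ground set mapped by `f` into the component of `tr - uw` containing `u`. -/
def edgeSide (K : PreSys α) (tr : SimpleGraph V) (f : α → V) (u w : V) : Set α :=
  {a | a ∈ K.E ∧ (tr.deleteEdges {s(u, w)}).Reachable (f a) u}

/-- The partial branch-decomposition data `(tr, f)` has width at most `t`:
every edge of the tree induces a partition whose sides have connectivity at most `t`. -/
def widthLE (K : PreSys α) (tr : SimpleGraph V) (f : α → V) (t : ℕ) : Prop :=
  ∀ u w : V, tr.Adj u w → K.lam (edgeSide K tr f u w) ≤ t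

/-- The set displayed by the vertex `x`: the elements of the ground set mapped to `x`. -/
def display (K : PreSys α) (f : α → V) (x : V) : Set α :=
  {a | a ∈ K.E ∧ f a = x}

/-- `X` is weakly `t`-branched: `λ(X) ≤ t` and there is a partial
branch-decomposition of width at most `t` in which every leaf displays a subset
of `E \ X` or a singleton. -/
def WeaklyBranched (K : PreSys α) (X : Set α) (t : ℕ) : Prop :=
  K.lam X ≤ t ∧
    ∃ (V : Type) (_ : Fintype V) (D : PBD K V), widthLE K D.tree D.f t ∧
      ∀ x : V, D.IsLeaf x →
        (display K D.f x ⊆ K.E \ X ∨ ∃ a : α, display K D.f x = {a})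

/-- `X` is `t`-branched: there is a partial branch-decomposition of width at most
`t` in which some leaf displays `E \ X` and every other leaf displays at most one
element of `X`. -/
def Branched (K : PreSys α) (X : Set α) (t : ℕ) : Prop :=
  ∃ (V : Type) (_ : Fintype V) (D : PBD K V), widthLE K D.tree D.f t ∧
    ∃ r : V, D.IsLeaf r ∧ display K D.f r = K.E \ X ∧
      ∀ x : V, D.IsLeaf x → x ≠ r → (display K D.f x ∩ X).ncard ≤ 1

/-- `κ_K(X, Y)`: the minimum connectivity of a set `Z` with `X ⊆ Z ⊆ E \ Y`. -/
noncomputable def kappa (K : PreSys α) (X Y : Set α) : ℕ :=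
  sInf {n | ∃ Z : Set α, X ⊆ Z ∧ Z ⊆ K.E \ Y ∧ K.lam Z = n}


/-!
Every `W ∈ T` has a hierarchical partition down to singletons all of whose parts have
connectivity at most `λ(W)`; this follows by induction on `(λ(W), |W|)`.
If `W` is `T`-linked and has at least two elements, it splits into two nonempty parts of
connectivity at most `λ(W)`: otherwise the sets whose trace on `W` is a proper subset of
connectivity at most `λ(W)` form a tangle of order `λ(W) + 1`, which by entanglement is the
truncation of `T` and so contains `W`, absurdly. If `W` is not linked, a superset `Y ∈ T` of
least connectivity has `λ(Y) < λ(W)`, and intersecting the parts for `Y` with `W` keeps them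
within `λ(W)` by submodularity.
The binary tree of the partition of `X`, with one more leaf displaying `E \ X` attached at the
top, is the partial branch-decomposition: every tree edge separates a part from its complement.
-/

namespace PreSys.IsConnSys

variable {K : PreSys α} {A B P Q : Set α}

theorem lam_compl (hK : K.IsConnSys) (hA : A ⊆ K.E) : K.lam (K.E \ A) = K.lam A :=
  (hK.2.1 A hA).symm

theorem lam_empty_le (hK : K.IsConnSys) (hB : B ⊆ K.E) : K.lam ∅ ≤ K.lam B := by
  have h := hK.2.2 B hB (K.E \ B) sdiff_subset
  rw [inter_sdiff_self, union_sdiff_cancel hB, ← hK.lam_compl subset_rfl, sdiff_self,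
    hK.lam_compl hB] at h
  omega

theorem lam_sdiff_add_lam_sdiff_le (hK : K.IsConnSys) (hP : P ⊆ K.E) (hQ : Q ⊆ K.E) :
    K.lam (P \ Q) + K.lam (Q \ P) ≤ K.lam P + K.lam Q := by
  have h := hK.2.2 P hP (K.E \ Q) sdiff_subset
  have hinter : P ∩ (K.E \ Q) = P \ Q := by
    rw [← inter_sdiff_assoc, inter_eq_left.mpr hP]
  have hunion : P ∪ (K.E \ Q) = K.E \ (Q \ P) := by
    ext x; by_cases hx : x ∈ P
    · simp [hx, hP hx]
    · simp [hx]
  rw [hinter, hunion, hK.lam_compl (sdiff_subset.trans hQ), hK.lam_compl hQ] at h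
  omega

end PreSys.IsConnSys

namespace IsTangle

variable {K : PreSys α} {k : ℕ} {T : Set (Set α)} {A B W : Set α}

theorem subset_ground (hT : IsTangle K k T) (hA : A ∈ T) : A ⊆ K.E := (hT.1 A hA).1

theorem lam_lt (hT : IsTangle K k T) (hA : A ∈ T) : K.lam A < k := (hT.1 A hA).2

theorem compl_mem_of_notMem (hT : IsTangle K k T) (hA : A ⊆ K.E) (hlt : K.lam A < k)
    (h : A ∉ T) : K.E \ A ∈ T :=
  not_not.mp fun hc => h ((hT.2.1 A hA hlt).mpr hc)

theorem union_mem (hT : IsTangle K k T) (hA : A ∈ T) (hB : B ∈ T) (hlt : K.lam (A ∪ B) < k) :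
    A ∪ B ∈ T := by
  by_contra h
  have hAB : A ∪ B ⊆ K.E := union_subset (hT.subset_ground hA) (hT.subset_ground hB)
  exact hT.2.2.1 A hA B hB _ (hT.compl_mem_of_notMem hAB hlt h) (union_sdiff_cancel hAB)

theorem mem_of_subset (hT : IsTangle K k T) (hW : W ∈ T) (hAW : A ⊆ W) (hlt : K.lam A < k) :
    A ∈ T := by
  by_contra h
  have hAE := hAW.trans (hT.subset_ground hW)
  refine hT.2.2.1 _ (hT.compl_mem_of_notMem hAE hlt h) W hW W hW ?_
  rw [union_assoc, union_self]
  exact subset_antisymm (union_subset sdiff_subset (hT.subset_ground hW))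
    ((sdiff_union_of_subset hAE).symm.subset.trans (union_subset_union_right _ hAW))

theorem truncate (hK : K.IsConnSys) (hT : IsTangle K k T) {t : ℕ} (htk : t ≤ k) :
    IsTangle K t {A | A ∈ T ∧ K.lam A < t} := by
  refine ⟨fun A hA => ⟨hT.subset_ground hA.1, hA.2⟩, fun A hA hlt => ?_,
    fun A hA B hB C hC => hT.2.2.1 A hA.1 B hB.1 C hC.1, fun A hA => hT.2.2.2 A hA.1⟩
  have hlt' : K.lam (K.E \ A) < t := by rwa [hK.lam_compl hA]
  simp only [mem_ofPred_eq, hlt, hlt', and_true]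
  exact hT.2.1 A hA (hlt.trans_le htk)

theorem lam_inter_le (hK : K.IsConnSys) (hT : IsTangle K k T) (hA : A ∈ T) (hB : B ∈ T)
    (h : A ∪ B ∈ T → K.lam A ≤ K.lam (A ∪ B)) : K.lam (A ∩ B) ≤ K.lam B := by
  have hsub := hK.2.2 A (hT.subset_ground hA) B (hT.subset_ground hB)
  by_cases hlt : K.lam (A ∪ B) < k
  · have := h (hT.union_mem hA hB hlt)
    omega
  · have := hT.lam_lt hA
    omega

/-- The only tangle of order `λ(W) + 1` is the truncation of `T`. -/
theorem mem_of_entangled (hK : K.IsConnSys) (hent : Entangled K k) (hT : IsTangle K k T)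
    (hW : W ∈ T) {T' : Set (Set α)} (hT' : IsTangle K (K.lam W + 1) T') : W ∈ T' := by
  have htk : K.lam W + 1 ≤ k := hT.lam_lt hW
  rw [← hent _ htk _ _ (hT.truncate hK htk) hT']
  exact ⟨hW, Nat.lt_succ_self _⟩

end IsTangle

theorem exists_lam_min_superset (K : PreSys α) {T : Set (Set α)} {W : Set α} (hW : W ∈ T) :
    ∃ Y ∈ T, W ⊆ Y ∧ ∀ Z ∈ T, W ⊆ Z → K.lam Y ≤ K.lam Z := by
  classical
  have hex : ∃ n, ∃ Z ∈ T, W ⊆ Z ∧ K.lam Z = n := ⟨_, W, hW, subset_rfl, rfl⟩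
  obtain ⟨Y, hY, hWY, hYn⟩ := Nat.find_spec hex
  exact ⟨Y, hY, hWY, fun Z hZ hWZ => hYn ▸ Nat.find_min' hex ⟨Z, hZ, hWZ, rfl⟩⟩

theorem Set.eq_sdiff_singleton_of_ncard {E A : Set α} {e : α} (hE : E.Finite) (hAE : A ⊆ E)
    (heE : e ∈ E) (heA : e ∉ A) (hcard : A.ncard = E.ncard - 1) : A = E \ {e} := by
  refine Set.eq_of_subset_of_ncard_le (fun x hx => ⟨hAE hx, ?_⟩) ?_ hE.sdiff
  · rintro rfl
    exact heA hx
  · rw [Set.ncard_sdiff_singleton_of_mem heE, hcard]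

theorem isTangle_avoiding {K : PreSys α} (hK : K.IsConnSys) {e : α} (he : e ∈ K.E) {m : ℕ}
    (hm : m < K.lam {e}) : IsTangle K (m + 1) {A | A ⊆ K.E ∧ K.lam A ≤ m ∧ e ∉ A} := by
  refine ⟨fun A hA => ⟨hA.1, Nat.lt_succ_of_le hA.2.1⟩, fun A hA hlt => ?_, ?_, ?_⟩
  · have hlt' : K.lam (K.E \ A) ≤ m := by rw [hK.lam_compl hA]; omega
    simp only [mem_ofPred_eq, hA, sdiff_subset, Nat.le_of_lt_succ hlt, hlt', true_and, mem_sdiff,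
      he, not_not]
  · rintro A ⟨-, -, heA⟩ B ⟨-, -, heB⟩ C ⟨-, -, heC⟩ hABC
    rw [← hABC] at he
    rcases he with (h | h) | h
    exacts [heA h, heB h, heC h]
  · rintro A ⟨hAE, hAm, heA⟩ hcard
    rw [Set.eq_sdiff_singleton_of_ncard hK.1 hAE he heA hcard,
      hK.lam_compl (singleton_subset_iff.mpr he)] at hAm
    omega

theorem IsTangle.lam_singleton_le {K : PreSys α} {k : ℕ} {T : Set (Set α)} {W : Set α}
    (hK : K.IsConnSys) (hent : Entangled K k) (hT : IsTangle K k T) (hW : W ∈ T) {e : α}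
    (he : e ∈ W) : K.lam {e} ≤ K.lam W := by
  by_contra! hlt
  exact (hT.mem_of_entangled hK hent hW (isTangle_avoiding hK (hT.subset_ground hW he) hlt)).2.2 he

def HasProperCover (K : PreSys α) (W : Set α) : Prop :=
  ∃ P Q, P ∪ Q = W ∧ P ≠ W ∧ Q ≠ W ∧ K.lam P ≤ K.lam W ∧ K.lam Q ≤ K.lam W

theorem HasProperCover.exists_partition {K : PreSys α} {W : Set α} (h : HasProperCover K W)
    (hK : K.IsConnSys) (hWE : W ⊆ K.E) :
    ∃ S₁ S₂, Disjoint S₁ S₂ ∧ S₁ ∪ S₂ = W ∧ S₁.Nonempty ∧ S₂.Nonempty ∧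
      K.lam S₁ ≤ K.lam W ∧ K.lam S₂ ≤ K.lam W := by
  obtain ⟨P, Q, hPQ, hP, hQ, hPn, hQn⟩ := h
  have hPW : P ⊆ W := hPQ ▸ subset_union_left
  have hQW : Q ⊆ W := hPQ ▸ subset_union_right
  wlog h : K.lam (Q \ P) ≤ K.lam W generalizing P Q
  · have hpos := hK.lam_sdiff_add_lam_sdiff_le (hPW.trans hWE) (hQW.trans hWE)
    exact this Q P (union_comm P Q ▸ hPQ) hQ hP hQn hPn hQW hPW (by omega)
  obtain ⟨x, hxW, hxQ⟩ := sdiff_nonempty.mpr fun hWQ => hQ (hQW.antisymm hWQ)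
  obtain ⟨y, hyW, hyP⟩ := sdiff_nonempty.mpr fun hWP => hP (hPW.antisymm hWP)
  refine ⟨P, Q \ P, disjoint_sdiff_right, by rw [union_sdiff_self, hPQ], ?_, ?_, hPn, h⟩
  · exact ⟨x, (hPQ ▸ hxW : x ∈ P ∪ Q).resolve_right hxQ⟩
  · exact ⟨y, (hPQ ▸ hyW : y ∈ P ∪ Q).resolve_left hyP, hyP⟩

def IsLinked (K : PreSys α) (T : Set (Set α)) (W : Set α) : Prop :=
  ∀ Z ∈ T, W ⊆ Z → K.lam W ≤ K.lam Z

def traceFamily (K : PreSys α) (W : Set α) : Set (Set α) :=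
  {A | A ⊆ K.E ∧ K.lam A ≤ K.lam W ∧ K.lam (W ∩ A) ≤ K.lam W ∧ W ∩ A ≠ W}

theorem Set.inter_sdiff_eq_of_subset {E W : Set α} (hWE : W ⊆ E) (A : Set α) : W ∩ (E \ A) = W \ A := by
  rw [← inter_sdiff_assoc, inter_eq_left.mpr hWE]

namespace IsLinked

variable {K : PreSys α} {k : ℕ} {T : Set (Set α)} {A W : Set α}

theorem lam_inter_le (hlink : IsLinked K T W) (hK : K.IsConnSys) (hT : IsTangle K k T)
    (hW : W ∈ T) (hA : A ∈ T) : K.lam (W ∩ A) ≤ K.lam A :=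
  hT.lam_inter_le hK hW hA fun h => hlink _ h subset_union_left

theorem lam_sdiff_le_of_notMem (hlink : IsLinked K T W) (hK : K.IsConnSys) (hT : IsTangle K k T)
    (hW : W ∈ T) (hAE : A ⊆ K.E) (hAW : K.lam A ≤ K.lam W) (hAT : A ∉ T) :
    K.lam (W \ A) ≤ K.lam A := by
  have h := hlink.lam_inter_le hK hT hW
    (hT.compl_mem_of_notMem hAE (hAW.trans_lt (hT.lam_lt hW)) hAT)
  rwa [inter_sdiff_eq_of_subset (hT.subset_ground hW), hK.lam_compl hAE] at h

theorem mem_of_mem_traceFamily (hlink : IsLinked K T W) (hK : K.IsConnSys)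
    (hT : IsTangle K k T) (hW : W ∈ T) (hcover : ¬ HasProperCover K W)
    (hA : A ∈ traceFamily K W) (hne : (W ∩ A).Nonempty) : A ∈ T := by
  obtain ⟨hAE, hAW, hWA, hWAne⟩ := hA
  by_contra hAT
  refine hcover ⟨_, _, inter_union_sdiff W A, hWAne, ?_, hWA,
    (hlink.lam_sdiff_le_of_notMem hK hT hW hAE hAW hAT).trans hAW⟩
  rwa [Ne, sdiff_eq_left, not_disjoint_iff_nonempty_inter]

theorem mem_traceFamily_iff (hlink : IsLinked K T W) (hK : K.IsConnSys) (hT : IsTangle K k T)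
    (hW : W ∈ T) (hWne : W.Nonempty) (hcover : ¬ HasProperCover K W) (hAE : A ⊆ K.E)
    (hAW : K.lam A ≤ K.lam W) : A ∈ traceFamily K W ↔ K.E \ A ∉ traceFamily K W := by
  have hWE := hT.subset_ground hW
  have hempty : K.lam ∅ ≤ K.lam W := hK.lam_empty_le hWE
  simp only [traceFamily, mem_ofPred_eq, hAE, hAW, sdiff_subset, hK.lam_compl hAE,
    inter_sdiff_eq_of_subset hWE, true_and]
  constructor
  · rintro ⟨h, hne⟩ ⟨h', hne'⟩
    exact hcover ⟨_, _, inter_union_sdiff W A, hne, hne', h, h'⟩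
  · intro h
    by_cases hWA : W ∩ A = W
    · rw [inter_eq_left, ← sdiff_eq_empty] at hWA
      exact absurd ⟨hWA ▸ hempty, hWA ▸ hWne.ne_empty.symm⟩ h
    by_cases hAT : A ∈ T
    · exact ⟨(hlink.lam_inter_le hK hT hW hAT).trans hAW, hWA⟩
    · have hWA' : W \ A = W := not_not.mp fun hne =>
        h ⟨(hlink.lam_sdiff_le_of_notMem hK hT hW hAE hAW hAT).trans hAW, hne⟩
      rw [sdiff_eq_left, disjoint_iff_inter_eq_empty] at hWA'
      exact ⟨hWA' ▸ hempty, hWA' ▸ hWne.ne_empty.symm⟩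

theorem isTangle_traceFamily (hlink : IsLinked K T W) (hK : K.IsConnSys) (hent : Entangled K k)
    (hT : IsTangle K k T) (hW : W ∈ T) (hW2 : 1 < W.ncard) (hcover : ¬ HasProperCover K W) :
    IsTangle K (K.lam W + 1) (traceFamily K W) := by
  have hWE := hT.subset_ground hW
  refine ⟨fun A hA => ⟨hA.1, Nat.lt_succ_of_le hA.2.1⟩, fun A hAE hlt =>
    hlink.mem_traceFamily_iff hK hT hW (nonempty_of_ncard_ne_zero (by omega)) hcover hAE
      (Nat.le_of_lt_succ hlt), fun A hA B hB C hC hABC => ?_, ?_⟩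
  · have hcov : W ∩ A ∪ W ∩ B ∪ W ∩ C = W := by
      rw [← inter_union_distrib_left, ← inter_union_distrib_left, hABC, inter_eq_left.mpr hWE]
    have hmem := fun {D} (hD : D ∈ traceFamily K W) (hne : W ∩ D ≠ ∅) =>
      hlink.mem_of_mem_traceFamily hK hT hW hcover hD (nonempty_iff_ne_empty.mpr hne)
    by_cases hA0 : W ∩ A = ∅
    · rw [hA0, empty_union] at hcov
      exact hcover ⟨_, _, hcov, hB.2.2.2, hC.2.2.2, hB.2.2.1, hC.2.2.1⟩
    by_cases hB0 : W ∩ B = ∅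
    · rw [hB0, union_empty] at hcov
      exact hcover ⟨_, _, hcov, hA.2.2.2, hC.2.2.2, hA.2.2.1, hC.2.2.1⟩
    by_cases hC0 : W ∩ C = ∅
    · rw [hC0, union_empty] at hcov
      exact hcover ⟨_, _, hcov, hA.2.2.2, hB.2.2.2, hA.2.2.1, hB.2.2.1⟩
    exact hT.2.2.1 A (hmem hA hA0) B (hmem hB hB0) C (hmem hC hC0) hABC
  · rintro A ⟨hAE, -, hWA, hWAne⟩ hcard
    obtain ⟨e, heW, heA⟩ := sdiff_nonempty.mpr fun h => hWAne (inter_eq_left.mpr h)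
    rw [Set.eq_sdiff_singleton_of_ncard hK.1 hAE (hWE heW) heA hcard,
      inter_sdiff_eq_of_subset hWE] at hWA
    refine hcover ⟨_, _, union_sdiff_cancel (singleton_subset_iff.mpr heW), ?_,
      fun h => (h.symm ▸ heW : e ∈ W \ {e}).2 rfl, hT.lam_singleton_le hK hent hW heW, hWA⟩
    rintro rfl
    simp at hW2

theorem exists_split (hlink : IsLinked K T W) (hK : K.IsConnSys) (hent : Entangled K k)
    (hT : IsTangle K k T) (hW : W ∈ T) (hW2 : 1 < W.ncard) :
    ∃ S₁ S₂, Disjoint S₁ S₂ ∧ S₁ ∪ S₂ = W ∧ S₁.Nonempty ∧ S₂.Nonempty ∧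
      K.lam S₁ ≤ K.lam W ∧ K.lam S₂ ≤ K.lam W := by
  by_cases hcover : HasProperCover K W
  · exact hcover.exists_partition hK (hT.subset_ground hW)
  · exact ((hT.mem_of_entangled hK hent hW
      (hlink.isTangle_traceFamily hK hent hT hW hW2 hcover)).2.2.2 (inter_self W)).elim

end IsLinked

/-- Hierarchical partitions: a node stands for the union of the sets below it. -/
inductive SetTree (α : Type*)
  | leaf (s : Set α) : SetTree α
  | node (l r : SetTree α) : SetTree α

namespace SetTree

def supp : SetTree α → Set α
  | leaf s => s
  | node l r => l.supp ∪ r.supp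

def nodeSets : SetTree α → Set (Set α)
  | leaf s => {s}
  | node l r => insert (l.supp ∪ r.supp) (l.nodeSets ∪ r.nodeSets)

def IsDisjoint : SetTree α → Prop
  | leaf _ => True
  | node l r => Disjoint l.supp r.supp ∧ l.IsDisjoint ∧ r.IsDisjoint

def SubsingletonLeaves : SetTree α → Prop
  | leaf s => s.Subsingleton
  | node l r => l.SubsingletonLeaves ∧ r.SubsingletonLeaves

def restrict (C : Set α) : SetTree α → SetTree α
  | leaf s => leaf (s ∩ C)
  | node l r => node (l.restrict C) (r.restrict C)

theorem supp_mem_nodeSets : ∀ t : SetTree α, t.supp ∈ t.nodeSets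
  | leaf _ => rfl
  | node _ _ => mem_insert _ _

theorem subset_supp_of_mem_nodeSets : ∀ {t : SetTree α} {s : Set α}, s ∈ t.nodeSets → s ⊆ t.supp
  | leaf _, _, rfl => subset_rfl
  | node l r, s, hs => by
    rcases hs with rfl | hs | hs
    · exact subset_rfl
    · exact (subset_supp_of_mem_nodeSets hs).trans subset_union_left
    · exact (subset_supp_of_mem_nodeSets hs).trans subset_union_right

theorem supp_restrict (C : Set α) : ∀ t : SetTree α, (t.restrict C).supp = t.supp ∩ C
  | leaf _ => rfl
  | node l r => by
    simp only [restrict, supp, supp_restrict C l, supp_restrict C r, union_inter_distrib_right]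

theorem nodeSets_restrict (C : Set α) :
    ∀ t : SetTree α, (t.restrict C).nodeSets = (· ∩ C) '' t.nodeSets
  | leaf _ => by simp [restrict, nodeSets]
  | node l r => by
    simp only [restrict, nodeSets, supp_restrict, nodeSets_restrict C l, nodeSets_restrict C r,
      image_insert_eq, image_union, union_inter_distrib_right]

theorem IsDisjoint.restrict (C : Set α) : ∀ {t : SetTree α}, t.IsDisjoint → (t.restrict C).IsDisjoint
  | leaf _, _ => trivial
  | node _ _, ⟨h, hl, hr⟩ => by
    refine ⟨?_, hl.restrict C, hr.restrict C⟩
    rw [supp_restrict, supp_restrict]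
    exact h.mono inter_subset_left inter_subset_left

theorem SubsingletonLeaves.restrict (C : Set α) :
    ∀ {t : SetTree α}, t.SubsingletonLeaves → (t.restrict C).SubsingletonLeaves
  | leaf _, h => h.anti inter_subset_left
  | node _ _, ⟨hl, hr⟩ => ⟨hl.restrict C, hr.restrict C⟩

structure IsDecomp (lam : Set α → ℕ) (t : SetTree α) (W : Set α) (n : ℕ) : Prop where
  supp_eq : t.supp = W
  isDisjoint : t.IsDisjoint
  subsingletonLeaves : t.SubsingletonLeaves
  lam_le : ∀ s ∈ t.nodeSets, lam s ≤ n

variable {lam : Set α → ℕ} {t t₁ t₂ : SetTree α} {W W₁ W₂ Y : Set α} {n m : ℕ}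

theorem isDecomp_leaf (hW : W.Subsingleton) (h : lam W ≤ n) : (leaf W).IsDecomp lam W n :=
  ⟨rfl, trivial, hW, fun _ hs => (mem_singleton_iff.mp hs) ▸ h⟩

theorem IsDecomp.mono (ht : t.IsDecomp lam W n) (h : n ≤ m) : t.IsDecomp lam W m :=
  ⟨ht.supp_eq, ht.isDisjoint, ht.subsingletonLeaves, fun s hs => (ht.lam_le s hs).trans h⟩

theorem IsDecomp.node (h₁ : t₁.IsDecomp lam W₁ n) (h₂ : t₂.IsDecomp lam W₂ n)
    (hdisj : Disjoint W₁ W₂) (h : lam (W₁ ∪ W₂) ≤ n) : (node t₁ t₂).IsDecomp lam (W₁ ∪ W₂) n where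
  supp_eq := by rw [supp, h₁.supp_eq, h₂.supp_eq]
  isDisjoint := ⟨h₁.supp_eq ▸ h₂.supp_eq ▸ hdisj, h₁.isDisjoint, h₂.isDisjoint⟩
  subsingletonLeaves := ⟨h₁.subsingletonLeaves, h₂.subsingletonLeaves⟩
  lam_le := by
    rintro s (rfl | hs | hs)
    · rwa [h₁.supp_eq, h₂.supp_eq]
    · exact h₁.lam_le s hs
    · exact h₂.lam_le s hs

theorem IsDecomp.restrict (ht : t.IsDecomp lam Y n) (hWY : W ⊆ Y)
    (h : ∀ s ∈ t.nodeSets, lam (s ∩ W) ≤ m) : (t.restrict W).IsDecomp lam W m where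
  supp_eq := by rw [supp_restrict, ht.supp_eq, inter_eq_right.mpr hWY]
  isDisjoint := ht.isDisjoint.restrict W
  subsingletonLeaves := ht.subsingletonLeaves.restrict W
  lam_le := by
    rw [nodeSets_restrict]
    rintro _ ⟨s, hs, rfl⟩
    exact h s hs

end SetTree

namespace IsTangle

open SetTree

variable {K : PreSys α} {k : ℕ} {T : Set (Set α)}

theorem isDecomp_restrict (hK : K.IsConnSys) (hT : IsTangle K k T) {W Y : Set α} (hW : W ∈ T)
    (hY : Y ∈ T) (hWY : W ⊆ Y) (hmin : ∀ Z ∈ T, W ⊆ Z → K.lam Y ≤ K.lam Z) {t : SetTree α}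
    (ht : t.IsDecomp K.lam Y (K.lam Y)) : (t.restrict W).IsDecomp K.lam W (K.lam W) := by
  refine ht.restrict hWY fun s hs => ?_
  have hsY : s ⊆ Y := ht.supp_eq ▸ subset_supp_of_mem_nodeSets hs
  have hsT := hT.mem_of_subset hY hsY ((ht.lam_le s hs).trans_lt (hT.lam_lt hY))
  exact hT.lam_inter_le hK hsT hW fun hu => (ht.lam_le s hs).trans (hmin _ hu subset_union_right)

theorem exists_isDecomp (hK : K.IsConnSys) (hent : Entangled K k) (hT : IsTangle K k T)
    {W : Set α} (hW : W ∈ T) : ∃ t : SetTree α, t.IsDecomp K.lam W (K.lam W) := by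
  induction hm : toLex (K.lam W, W.ncard) using WellFoundedLT.induction generalizing W with
  | _ m IH =>
  subst hm
  replace IH : ∀ Z ∈ T, K.lam Z ≤ K.lam W → (K.lam Z = K.lam W → Z.ncard < W.ncard) →
      ∃ t : SetTree α, t.IsDecomp K.lam Z (K.lam Z) :=
    fun Z hZ h₁ h₂ => IH _ (Prod.Lex.toLex_lt_toLex'.mpr ⟨h₁, h₂⟩) hZ rfl
  have hWfin : W.Finite := hK.1.subset (hT.subset_ground hW)
  by_cases hlink : IsLinked K T W
  · by_cases hW2 : 1 < W.ncard
    · obtain ⟨S₁, S₂, hdisj, rfl, hne₁, hne₂, h₁, h₂⟩ := hlink.exists_split hK hent hT hW hW2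
      have hfin₁ := hWfin.subset subset_union_left
      have hfin₂ := hWfin.subset subset_union_right
      have hcard := ncard_union_eq hdisj hfin₁ hfin₂
      have hpos₁ := hne₁.ncard_pos hfin₁
      have hpos₂ := hne₂.ncard_pos hfin₂
      obtain ⟨t₁, ht₁⟩ := IH S₁ (hT.mem_of_subset hW subset_union_left
        (h₁.trans_lt (hT.lam_lt hW))) h₁ fun _ => by omega
      obtain ⟨t₂, ht₂⟩ := IH S₂ (hT.mem_of_subset hW subset_union_right
        (h₂.trans_lt (hT.lam_lt hW))) h₂ fun _ => by omega
      exact ⟨node t₁ t₂, (ht₁.mono h₁).node (ht₂.mono h₂) hdisj le_rfl⟩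
    · have := hWfin.to_subtype
      exact ⟨leaf W, isDecomp_leaf (ncard_le_one_iff_subsingleton.mp (not_lt.mp hW2)) le_rfl⟩
  · obtain ⟨Y, hY, hWY, hmin⟩ := exists_lam_min_superset K hW
    obtain ⟨Z, hZ, hWZ, hZW⟩ : ∃ Z ∈ T, W ⊆ Z ∧ K.lam Z < K.lam W := by
      simpa [IsLinked] using hlink
    have hYW : K.lam Y < K.lam W := (hmin Z hZ hWZ).trans_lt hZW
    obtain ⟨t, ht⟩ := IH Y hY hYW.le fun h => absurd h hYW.ne
    exact ⟨t.restrict W, hT.isDecomp_restrict hK hW hY hWY hmin ht⟩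

end IsTangle

/-- A rooted tree given by parent pointers; the rank certifies that following parents
always ends at the root. -/
structure ParentMap (V : Type*) where
  par : V → V
  root : V
  rank : V → ℕ
  par_root : par root = root
  rank_par_lt : ∀ v, v ≠ root → rank (par v) < rank v

namespace ParentMap

variable (P : ParentMap V)

def graph : SimpleGraph V := SimpleGraph.fromRel fun u w => P.par u = w

/-- `c` lies on the path from `v` to the root. -/
def IsAncestor (c v : V) : Prop := Relation.ReflTransGen (fun u w => P.par u = w) v c

variable {P} {c u v : V}

theorem par_ne (hv : v ≠ P.root) : P.par v ≠ v :=
  fun h => (P.rank_par_lt v hv).ne (congrArg P.rank h)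

theorem rank_par_le (v : V) : P.rank (P.par v) ≤ P.rank v := by
  by_cases hv : v = P.root
  · rw [hv, P.par_root]
  · exact (P.rank_par_lt v hv).le

theorem IsAncestor.rank_le (h : P.IsAncestor c v) : P.rank c ≤ P.rank v := by
  induction h with
  | refl => exact le_rfl
  | tail _ hstep ih => exact hstep ▸ (P.rank_par_le _).trans ih

theorem isAncestor_self (v : V) : P.IsAncestor v v := Relation.ReflTransGen.refl

theorem isAncestor_iff_of_ne (hvc : v ≠ c) : P.IsAncestor c v ↔ P.IsAncestor c (P.par v) := by
  refine ⟨fun h => ?_, Relation.ReflTransGen.head rfl⟩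
  rcases Relation.ReflTransGen.cases_head_iff.mp h with rfl | ⟨w, rfl, hw⟩
  exacts [absurd rfl hvc, hw]

theorem isAncestor_root (v : V) : P.IsAncestor P.root v := by
  induction hn : P.rank v using Nat.strong_induction_on generalizing v with
  | _ n IH =>
  by_cases hv : v = P.root
  · rw [hv]; exact isAncestor_self _
  · exact Relation.ReflTransGen.head rfl (IH _ (hn ▸ P.rank_par_lt v hv) _ rfl)

theorem eq_root_of_isAncestor_root (h : P.IsAncestor c P.root) : c = P.root := by
  induction h with
  | refl => rfl
  | tail _ hstep ih => rw [← hstep, ih, P.par_root]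

theorem not_isAncestor_par (hc : c ≠ P.root) : ¬ P.IsAncestor c (P.par c) :=
  fun h => (P.rank_par_lt c hc).not_ge h.rank_le

theorem reachable_par (hvc : v ≠ c) :
    (P.graph.deleteEdges {s(c, P.par c)}).Reachable v (P.par v) := by
  by_cases hv : v = P.root
  · rw [hv, P.par_root]
  refine SimpleGraph.Adj.reachable (SimpleGraph.deleteEdges_adj.mpr
    ⟨(SimpleGraph.fromRel_adj _ _ _).mpr ⟨(par_ne hv).symm, .inl rfl⟩, ?_⟩)
  rw [mem_singleton_iff, Sym2.eq_iff]
  rintro (⟨rfl, -⟩ | ⟨hv', hvc'⟩)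
  · exact hvc rfl
  · have hc : c ≠ P.root := fun h => hv (by rw [hv', h, P.par_root])
    have := P.rank_par_lt _ hv
    rw [hvc'] at this
    exact (hv' ▸ P.rank_par_lt _ hc).not_gt this

theorem reachable_of_isAncestor (h : P.IsAncestor c v) :
    (P.graph.deleteEdges {s(c, P.par c)}).Reachable v c := by
  induction h using Relation.ReflTransGen.head_induction_on with
  | refl => rfl
  | @head w x hstep _ ih =>
    by_cases hwc : w = c
    · rw [hwc]
    · exact (hstep ▸ reachable_par hwc).trans ih

theorem reachable_root_of_not_isAncestor (h : ¬ P.IsAncestor c v) :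
    (P.graph.deleteEdges {s(c, P.par c)}).Reachable v P.root := by
  induction isAncestor_root (P := P) v using Relation.ReflTransGen.head_induction_on with
  | refl => rfl
  | @head w x hstep _ ih =>
    have hwc : w ≠ c := fun hwc => h (hwc ▸ isAncestor_self _)
    exact (reachable_par hwc).trans (hstep ▸ ih (hstep ▸ (isAncestor_iff_of_ne hwc).not.mp h))

theorem isAncestor_iff_of_reachable (h : (P.graph.deleteEdges {s(c, P.par c)}).Reachable u v) :
    P.IsAncestor c u ↔ P.IsAncestor c v := by
  rw [SimpleGraph.reachable_iff_reflTransGen] at h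
  induction h with
  | refl => rfl
  | tail _ hadj ih =>
    rename_i w x _
    refine ih.trans ?_
    obtain ⟨hadj, hne⟩ := SimpleGraph.deleteEdges_adj.mp hadj
    obtain ⟨-, hwx | hxw⟩ := (SimpleGraph.fromRel_adj _ _ _).mp hadj
    · have hwc : w ≠ c := by rintro rfl; exact hne (hwx ▸ rfl)
      rw [isAncestor_iff_of_ne hwc, hwx]
    · have hxc : x ≠ c := by rintro rfl; exact hne (hxw ▸ Sym2.eq_swap)
      rw [isAncestor_iff_of_ne hxc, hxw]

theorem reachable_iff_isAncestor :
    (P.graph.deleteEdges {s(c, P.par c)}).Reachable v c ↔ P.IsAncestor c v :=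
  ⟨fun h => (isAncestor_iff_of_reachable h).mpr (isAncestor_self c), reachable_of_isAncestor⟩

theorem reachable_par_iff_not_isAncestor (hc : c ≠ P.root) :
    (P.graph.deleteEdges {s(c, P.par c)}).Reachable v (P.par c) ↔ ¬ P.IsAncestor c v := by
  refine ⟨fun h hv => not_isAncestor_par hc ((isAncestor_iff_of_reachable h).mp hv), fun h => ?_⟩
  exact (reachable_root_of_not_isAncestor h).trans
    (reachable_root_of_not_isAncestor (not_isAncestor_par hc)).symm

theorem isTree : P.graph.IsTree where
  connected := by
    have : Nonempty V := ⟨P.root⟩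
    refine SimpleGraph.Connected.mk fun u v => ?_
    have hroot : ∀ w, P.graph.Reachable w P.root := fun w =>
      (reachable_of_isAncestor (isAncestor_root w)).mono (SimpleGraph.deleteEdges_le _)
    exact (hroot u).trans (hroot v).symm
  isAcyclic := by
    refine SimpleGraph.isAcyclic_iff_forall_adj_isBridge.mpr fun v w hadj => ?_
    rw [SimpleGraph.isBridge_iff]
    obtain ⟨hne, hvw | hwv⟩ := (SimpleGraph.fromRel_adj _ _ _).mp hadj
    · have hv : v ≠ P.root := fun h => hne (by rw [← hvw, h, P.par_root])
      subst hvw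
      exact fun h => not_isAncestor_par hv (reachable_iff_isAncestor.mp h.symm)
    · have hw : w ≠ P.root := fun h => hne (by rw [← hwv, h, P.par_root])
      subst hwv
      rw [Sym2.eq_swap]
      exact fun h => not_isAncestor_par hw (reachable_iff_isAncestor.mp h)

theorem edgeSide_graph (K : PreSys α) (f : α → V) (c : V) :
    edgeSide K P.graph f c (P.par c) = {a | a ∈ K.E ∧ P.IsAncestor c (f a)} := by
  simp only [edgeSide, reachable_iff_isAncestor]

theorem edgeSide_graph_par (K : PreSys α) (f : α → V) (hc : c ≠ P.root) :
    edgeSide K P.graph f (P.par c) c = K.E \ {a | a ∈ K.E ∧ P.IsAncestor c (f a)} := by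
  ext a
  simp only [edgeSide, Sym2.eq_swap, reachable_par_iff_not_isAncestor hc, mem_sdiff,
    mem_ofPred_eq]
  tauto

theorem widthLE_graph {K : PreSys α} (hK : K.IsConnSys) {f : α → V} {n : ℕ}
    (h : ∀ c, c ≠ P.root → K.lam {a | a ∈ K.E ∧ P.IsAncestor c (f a)} ≤ n) :
    widthLE K P.graph f n := by
  intro u w hadj
  obtain ⟨hne, huw | hwu⟩ := (SimpleGraph.fromRel_adj _ _ _).mp hadj
  · have hu : u ≠ P.root := fun h => hne (by rw [← huw, h, P.par_root])
    rw [← huw, edgeSide_graph]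
    exact h u hu
  · have hw : w ≠ P.root := fun h => hne (by rw [← hwu, h, P.par_root])
    rw [← hwu, edgeSide_graph_par K f hw, hK.lam_compl (fun a ha => ha.1)]
    exact h w hw

end ParentMap

namespace SetTree

/-- The subtree at a position, read from the root (`false` = left); `none` off the tree. -/
def subtree? : SetTree α → List Bool → Option (SetTree α)
  | t, [] => some t
  | leaf _, _ :: _ => none
  | node l _, false :: p => l.subtree? p
  | node _ r, true :: p => r.subtree? p

def height : SetTree α → ℕ
  | leaf _ => 0
  | node l r => max l.height r.height + 1

open Classical in
noncomputable def leafPos : SetTree α → α → List Bool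
  | leaf _, _ => []
  | node l r, a => if a ∈ l.supp then false :: l.leafPos a else true :: r.leafPos a

variable {t s : SetTree α} {p q : List Bool}

@[simp] theorem subtree?_nil (t : SetTree α) : t.subtree? [] = some t := by cases t <;> rfl

theorem subtree?_append : ∀ (t : SetTree α) (p q : List Bool),
    t.subtree? (p ++ q) = (t.subtree? p).bind (·.subtree? q)
  | t, [], q => by simp
  | leaf _, _ :: _, _ => rfl
  | node l _, false :: p, q => subtree?_append l p q
  | node _ r, true :: p, q => subtree?_append r p q

theorem isSome_subtree?_of_prefix (hpq : p <+: q) (hq : (t.subtree? q).isSome) :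
    (t.subtree? p).isSome := by
  obtain ⟨u, rfl⟩ := hpq
  rw [subtree?_append] at hq
  cases h : t.subtree? p <;> simp_all

theorem supp_subtree?_mem_nodeSets : ∀ {t : SetTree α} {p : List Bool} {s : SetTree α},
    t.subtree? p = some s → s.supp ∈ t.nodeSets
  | t, [], s, h => by
    rw [subtree?_nil, Option.some_inj] at h
    exact h ▸ supp_mem_nodeSets t
  | leaf _, _ :: _, _, h => nomatch h
  | node l _, false :: _, _, h => .inr (.inl (supp_subtree?_mem_nodeSets (t := l) h))
  | node _ r, true :: _, _, h => .inr (.inr (supp_subtree?_mem_nodeSets (t := r) h))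

theorem supp_subtree?_subset (h : t.subtree? p = some s) : s.supp ⊆ t.supp :=
  subset_supp_of_mem_nodeSets (supp_subtree?_mem_nodeSets h)

theorem SubsingletonLeaves.subtree?_eq_leaf : ∀ {t : SetTree α} {p : List Bool} {S : Set α},
    t.SubsingletonLeaves → t.subtree? p = some (leaf S) → S.Subsingleton
  | leaf _, [], _, h, hS => by
    rw [subtree?_nil, Option.some_inj, leaf.injEq] at hS
    exact hS ▸ h
  | node _ _, [], _, _, hS => nomatch hS
  | leaf _, _ :: _, _, _, hS => nomatch hS
  | node l _, false :: _, _, h, hS => SubsingletonLeaves.subtree?_eq_leaf (t := l) h.1 hS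
  | node _ r, true :: _, _, h, hS => SubsingletonLeaves.subtree?_eq_leaf (t := r) h.2 hS

theorem length_le_height : ∀ {t : SetTree α} {p : List Bool},
    (t.subtree? p).isSome → p.length ≤ t.height
  | _, [], _ => Nat.zero_le _
  | leaf _, _ :: _, h => nomatch h
  | node l r, false :: _, h => by
    have := length_le_height (t := l) h
    simp only [List.length_cons, height]
    omega
  | node l r, true :: _, h => by
    have := length_le_height (t := r) h
    simp only [List.length_cons, height]
    omega

theorem subtree?_leafPos : ∀ {t : SetTree α} {a : α}, a ∈ t.supp →
    ∃ s, t.subtree? (t.leafPos a) = some (leaf s) ∧ a ∈ s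
  | leaf s, _, ha => ⟨s, rfl, ha⟩
  | node l r, a, ha => by
    by_cases hl : a ∈ l.supp
    · simpa [leafPos, hl, subtree?] using subtree?_leafPos hl
    · simpa [leafPos, hl, subtree?] using subtree?_leafPos (ha.resolve_left hl)

theorem prefix_leafPos_iff : ∀ {t : SetTree α} {p : List Bool} {s : SetTree α} {a : α},
    t.IsDisjoint → a ∈ t.supp → t.subtree? p = some s → (p <+: t.leafPos a ↔ a ∈ s.supp)
  | t, [], s, _, _, ha, h => by
    rw [subtree?_nil, Option.some_inj] at h
    simp [← h, ha]
  | leaf _, _ :: _, _, _, _, _, h => nomatch h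
  | node l r, d :: p, s, a, ⟨hdisj, hl, hr⟩, ha, h => by
    by_cases hal : a ∈ l.supp
    · cases d
      · simpa [leafPos, hal] using prefix_leafPos_iff hl hal h
      · simp only [leafPos, hal, if_true, List.cons_prefix_cons, Bool.true_eq_false, false_and,
          false_iff]
        exact fun has => hdisj.notMem_of_mem_left hal (supp_subtree?_subset (t := r) h has)
    · have har : a ∈ r.supp := ha.resolve_left hal
      cases d
      · simp only [leafPos, hal, if_false, List.cons_prefix_cons, Bool.false_eq_true, false_and,
          false_iff]
        exact fun has => hal (supp_subtree?_subset (t := l) h has)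
      · simpa [leafPos, hal] using prefix_leafPos_iff hr har h

theorem eq_of_prefix_of_subtree?_eq_leaf {S : Set α} (hp : t.subtree? p = some (leaf S))
    (hq : (t.subtree? q).isSome) (hpq : p <+: q) : q = p := by
  obtain ⟨u, rfl⟩ := hpq
  rw [subtree?_append, hp] at hq
  cases u with
  | nil => exact List.append_nil p
  | cons _ _ => exact nomatch hq

end SetTree

namespace SetTree

variable {t : SetTree α}

abbrev Pos (t : SetTree α) : Type := {p : List Bool // (t.subtree? p).isSome}

instance (t : SetTree α) : Finite t.Pos :=
  ((List.finite_length_le Bool t.height).subset fun _ => length_le_height).to_subtype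

theorem isSome_subtree?_dropLast (p : t.Pos) : (t.subtree? p.1.dropLast).isSome :=
  isSome_subtree?_of_prefix (List.dropLast_prefix _) p.2

/-- The cubic tree of the decomposition: the nodes of `t`, plus an extra root leaf `none`
attached to the top node `[]`. -/
def parentMap (t : SetTree α) : ParentMap (Option t.Pos) where
  par v := v.bind fun p => if p.1 = [] then none else some ⟨p.1.dropLast, isSome_subtree?_dropLast p⟩
  root := none
  rank v := v.elim 0 fun p => p.1.length + 1
  par_root := rfl
  rank_par_lt := by
    rintro (_ | ⟨p, hp⟩) h
    · exact absurd rfl h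
    · by_cases hp0 : p = []
      · simp [hp0]
      · simp only [Option.bind_some, hp0, if_false, Option.elim_some, List.length_dropLast]
        have : 0 < p.length := List.length_pos_iff.mpr hp0
        omega

theorem parentMap_par_some (p : t.Pos) (hp : p.1 ≠ []) :
    t.parentMap.par (some p) = some ⟨p.1.dropLast, isSome_subtree?_dropLast p⟩ := by
  simp [parentMap, hp]

theorem parentMap_par_eq_some_iff {w : Option t.Pos} {p : t.Pos} :
    t.parentMap.par w = some p ↔ ∃ q : t.Pos, w = some q ∧ ∃ d, q.1 = p.1 ++ [d] := by
  constructor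
  · rintro h
    obtain _ | q := w
    · exact nomatch h
    have hq : q.1 ≠ [] := by rintro hq; simp [parentMap, hq] at h
    rw [parentMap_par_some q hq, Option.some_inj] at h
    refine ⟨q, rfl, q.1.getLast hq, ?_⟩
    rw [← congrArg Subtype.val h, List.dropLast_append_getLast]
  · rintro ⟨q, rfl, d, hqd⟩
    rw [parentMap_par_some q (by rw [hqd]; simp)]
    exact congrArg some (Subtype.ext (show q.1.dropLast = p.1 by rw [hqd]; exact List.dropLast_concat))

theorem parentMap_isAncestor_some_iff {p q : t.Pos} :
    t.parentMap.IsAncestor (some p) (some q) ↔ p.1 <+: q.1 := by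
  constructor
  · intro h
    suffices ∀ v, t.parentMap.IsAncestor v (some q) → ∀ p' : t.Pos, v = some p' → p'.1 <+: q.1 from
      this _ h p rfl
    intro v hv
    induction hv with
    | refl => rintro p' ⟨⟩; exact List.prefix_rfl
    | tail _ hstep ih =>
      rintro p' rfl
      obtain ⟨q', rfl, d, hd⟩ := parentMap_par_eq_some_iff.mp hstep
      exact (hd ▸ List.prefix_append _ _).trans (ih q' rfl)
  · rintro ⟨u, hu⟩
    induction u using List.reverseRecOn generalizing q with
    | nil =>
      rw [show q = p from Subtype.ext (by simpa using hu.symm)]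
      exact ParentMap.isAncestor_self _
    | append_singleton u d ih =>
      let q' : t.Pos := ⟨p.1 ++ u, isSome_subtree?_of_prefix ⟨[d], by rw [← hu]; simp⟩ q.2⟩
      have hpar : t.parentMap.par (some q) = some q' :=
        parentMap_par_eq_some_iff.mpr ⟨q, rfl, d, by rw [← hu]; simp [q']⟩
      exact Relation.ReflTransGen.head hpar (ih rfl)

theorem parentMap_not_isAncestor_none (p : t.Pos) : ¬ t.parentMap.IsAncestor (some p) none :=
  fun h => nomatch ParentMap.eq_root_of_isAncestor_root h

end SetTree

namespace SetTree

variable {t : SetTree α}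

theorem mem_neighborSet_some {p : t.Pos} {w : Option t.Pos} :
    w ∈ t.parentMap.graph.neighborSet (some p) ↔
      w = t.parentMap.par (some p) ∨ ∃ q : t.Pos, w = some q ∧ ∃ d, q.1 = p.1 ++ [d] := by
  have hp : some p ≠ t.parentMap.root := Option.some_ne_none p
  rw [SimpleGraph.mem_neighborSet, ParentMap.graph, SimpleGraph.fromRel_adj,
    ← parentMap_par_eq_some_iff]
  constructor
  · rintro ⟨-, h | h⟩
    exacts [.inl h.symm, .inr h]
  · rintro (rfl | h)
    · exact ⟨(ParentMap.par_ne hp).symm, .inl rfl⟩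
    · exact ⟨fun hw => ParentMap.par_ne hp (hw ▸ h), .inr h⟩

theorem ncard_neighborSet_none :
    (t.parentMap.graph.neighborSet none).ncard = 1 := by
  rw [Set.ncard_eq_one]
  refine ⟨some ⟨[], by simp⟩, Set.ext fun w => ?_⟩
  rw [SimpleGraph.mem_neighborSet, ParentMap.graph, SimpleGraph.fromRel_adj, mem_singleton_iff]
  obtain _ | ⟨q, hq⟩ := w
  · simp
  · by_cases hq0 : q = []
    · subst hq0
      simp [parentMap]
    · simp [parentMap, hq0]

theorem ncard_neighborSet_of_leaf {p : t.Pos} {S : Set α} (hp : t.subtree? p.1 = some (leaf S)) :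
    (t.parentMap.graph.neighborSet (some p)).ncard = 1 := by
  rw [Set.ncard_eq_one]
  refine ⟨t.parentMap.par (some p), Set.ext fun w => ?_⟩
  rw [mem_neighborSet_some, mem_singleton_iff, or_iff_left_iff_imp]
  rintro ⟨q, -, d, hqd⟩
  have := congrArg List.length (eq_of_prefix_of_subtree?_eq_leaf hp q.2 ⟨[d], hqd.symm⟩)
  simp [hqd] at this

theorem ncard_neighborSet_of_node {p : t.Pos} {l r : SetTree α}
    (hp : t.subtree? p.1 = some (node l r)) :
    (t.parentMap.graph.neighborSet (some p)).ncard = 3 := by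
  have hchild : ∀ d, (t.subtree? (p.1 ++ [d])).isSome := fun d => by
    rw [subtree?_append, hp]
    cases d <;> simp [subtree?]
  let c : Bool → Option t.Pos := fun d => some ⟨p.1 ++ [d], hchild d⟩
  have hrank : ∀ d, t.parentMap.par (some p) ≠ c d := fun d h => by
    have h1 := t.parentMap.rank_par_lt (some p) (Option.some_ne_none p)
    rw [h] at h1
    simp [parentMap, c] at h1
  rw [Set.ncard_eq_three]
  refine ⟨_, c false, c true, hrank false, hrank true, by simp [c], Set.ext fun w => ?_⟩
  rw [mem_neighborSet_some]
  simp only [mem_insert_iff, mem_singleton_iff]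
  refine or_congr_right ⟨?_, ?_⟩
  · rintro ⟨q, rfl, d, hqd⟩
    cases d
    · exact .inl (congrArg some (Subtype.ext hqd))
    · exact .inr (congrArg some (Subtype.ext hqd))
  · rintro (rfl | rfl)
    exacts [⟨_, rfl, false, rfl⟩, ⟨_, rfl, true, rfl⟩]

open Classical in
noncomputable def leafMap (t : SetTree α) (a : α) : Option t.Pos :=
  if ha : a ∈ t.supp then
    some ⟨t.leafPos a, by obtain ⟨s, hs, -⟩ := subtree?_leafPos ha; simp [hs]⟩
  else none

theorem isAncestor_leafMap_iff (ht : t.IsDisjoint) {p : t.Pos} {s : SetTree α}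
    (hp : t.subtree? p.1 = some s) {a : α} :
    t.parentMap.IsAncestor (some p) (t.leafMap a) ↔ a ∈ s.supp := by
  by_cases ha : a ∈ t.supp
  · rw [leafMap, dif_pos ha, parentMap_isAncestor_some_iff]
    exact prefix_leafPos_iff ht ha hp
  · rw [leafMap, dif_neg ha]
    exact iff_of_false (parentMap_not_isAncestor_none p) fun h => ha (supp_subtree?_subset hp h)

theorem display_leafMap_none (K : PreSys α) : display K t.leafMap none = K.E \ t.supp := by
  ext a
  by_cases ha : a ∈ t.supp <;> simp [display, leafMap, ha]

theorem display_leafMap_of_leaf {K : PreSys α} (ht : t.IsDisjoint) (hE : t.supp ⊆ K.E)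
    {p : t.Pos} {S : Set α} (hp : t.subtree? p.1 = some (leaf S)) :
    display K t.leafMap (some p) = S := by
  ext a
  refine ⟨fun ⟨_, h⟩ => (isAncestor_leafMap_iff ht hp).mp (h ▸ ParentMap.isAncestor_self _),
    fun haS => ?_⟩
  have ha : a ∈ t.supp := supp_subtree?_subset hp haS
  refine ⟨hE ha, ?_⟩
  rw [leafMap, dif_pos ha]
  exact congrArg some (Subtype.ext (eq_of_prefix_of_subtree?_eq_leaf hp (by
    obtain ⟨s, hs, -⟩ := subtree?_leafPos ha; simp [hs]) ((prefix_leafPos_iff ht ha hp).mpr haS)))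

theorem ncard_neighborSet_eq_one_or_three (v : Option t.Pos) :
    (t.parentMap.graph.neighborSet v).ncard = 1 ∨ (t.parentMap.graph.neighborSet v).ncard = 3 := by
  obtain _ | p := v
  · exact .inl ncard_neighborSet_none
  · obtain ⟨_ | _, hs⟩ := Option.isSome_iff_exists.mp p.2
    exacts [.inl (ncard_neighborSet_of_leaf hs), .inr (ncard_neighborSet_of_node hs)]

theorem ncard_neighborSet_leafMap (a : α) :
    (t.parentMap.graph.neighborSet (t.leafMap a)).ncard = 1 := by
  by_cases ha : a ∈ t.supp
  · obtain ⟨s, hs, -⟩ := subtree?_leafPos ha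
    rw [leafMap, dif_pos ha]
    exact ncard_neighborSet_of_leaf hs
  · rw [leafMap, dif_neg ha]
    exact ncard_neighborSet_none

theorem widthLE_leafMap {K : PreSys α} (hK : K.IsConnSys) (ht : t.IsDisjoint) (hE : t.supp ⊆ K.E)
    {n : ℕ} (hlam : ∀ s ∈ t.nodeSets, K.lam s ≤ n) : widthLE K t.parentMap.graph t.leafMap n := by
  refine ParentMap.widthLE_graph hK fun c hc => ?_
  obtain _ | p := c
  · exact absurd rfl hc
  obtain ⟨s, hs⟩ := Option.isSome_iff_exists.mp p.2
  have hside : {a | a ∈ K.E ∧ t.parentMap.IsAncestor (some p) (t.leafMap a)} = s.supp := by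
    ext a
    rw [mem_ofPred_eq, isAncestor_leafMap_iff ht hs]
    exact ⟨And.right, fun ha => ⟨hE (supp_subtree?_subset hs ha), ha⟩⟩
  rw [hside]
  exact hlam _ (supp_subtree?_mem_nodeSets hs)

end SetTree

theorem SetTree.IsDecomp.branched {K : PreSys α} (hK : K.IsConnSys) {t : SetTree α} {X : Set α}
    {n : ℕ} (hXE : X ⊆ K.E) (ht : t.IsDecomp K.lam X n) : Branched K X n := by
  obtain ⟨rfl, hdisj, hsing, hlam⟩ := ht
  refine ⟨Option t.Pos, Fintype.ofFinite _, ⟨t.parentMap.graph, t.parentMap.isTree,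
    ncard_neighborSet_eq_one_or_three, t.leafMap, fun a _ => ncard_neighborSet_leafMap a⟩,
    widthLE_leafMap hK hdisj hXE hlam, none, ncard_neighborSet_none, display_leafMap_none K, ?_⟩
  rintro (_ | p) hleaf hne
  · exact absurd rfl hne
  obtain ⟨_ | _, hs⟩ := Option.isSome_iff_exists.mp p.2
  · change (display K t.leafMap (some p) ∩ _).ncard ≤ 1
    rw [display_leafMap_of_leaf hdisj hXE hs]
    have hsub := (hsing.subtree?_eq_leaf hs).anti (inter_subset_left (t := t.supp))
    exact (ncard_le_one hsub.finite).mpr hsub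
  · exact absurd (ncard_neighborSet_of_node hs) (by rw [show _ = 1 from hleaf]; decide)

theorem stmt14_general {α : Type*} (K : PreSys α) (hK : K.IsConnSys) (k : ℕ)
    (hent : Entangled K k) (T : Set (Set α)) (hT : IsTangle K k T)
    (X : Set α) (hX : X ∈ T) :
    Branched K X (K.lam X) := by
  obtain ⟨t, ht⟩ := hT.exists_isDecomp hK hent hX
  exact ht.branched hK (hT.subset_ground hX)

/-- If `T` is a tangle of order `k` in a `k`-entangled connectivity
system and `X ∈ T` is `T`-linked, then `X` is `λ(X)`-branched. -/
theorem stmt14 {α : Type*} (K : PreSys α) (hK : K.IsConnSys) (k : ℕ)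
    (hent : Entangled K k) (T : Set (Set α)) (hT : IsTangle K k T)
    (X : Set α) (hX : X ∈ T)
    (hlinked : ¬ ∃ Y ∈ T, X ⊆ Y ∧ K.lam Y < K.lam X) :
    Branched K X (K.lam X) :=
  stmt14_general K hK k hent T hT X hX
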